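/- Suppose the process {x_n} converges almost surely and let x := lim_{n→∞} x_n. If P(x) = 0 almost surely, then the process {a_n} converges almost surely as well, and lim_{n→∞} a_n = x almost surely. -/

import Mathlib

open MeasureTheory ProbabilityTheory Filter Set

noncomputable section

/-- The polynomial `P(z) = (1/2) ∑_{k=0}^m C(m,k) z^k (1-z)^{m-k} (p_k - k/m)`. -/
def polyP (m : ℕ) (p : ℕ → ℝ) (z : ℝ) : ℝ :=
  (1 / 2) * ∑ k ∈ Finset.range (m + 1),
    (m.choose k : ℝ) * z ^ k * (1 - z) ^ (m - k) * (p k - (k : ℝ) / m)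

/-- The zero set `Z_P = {z ∈ [0,1] : P(z) = 0}`. -/
def zeroSetP (m : ℕ) (p : ℕ → ℝ) : Set ℝ :=
  {z ∈ Set.Icc (0 : ℝ) 1 | polyP m p z = 0}

/-- The two-type preferential attachment process with `m` edges per new node and type
adoption parameters `p 0, …, p m`, defined on a probability space `(Ω, μ)` with filtration
`F`.  `A n` is the number of red nodes and `X n` the sum of the degrees of red nodes at time
`n`; the transition probabilities given `F n` are those of the model: a number `k` of red
neighbours is drawn from the `Binomial(m, x_n)` distribution, and then the new node is red
with probability `p k` (adding `1` to the red nodes and `k + m` to the red degrees) and blue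
with probability `1 - p k` (adding `k` to the red degrees). -/
structure PAProcess (Ω : Type) [MeasurableSpace Ω] where
  μ : Measure Ω
  isProb : IsProbabilityMeasure μ
  m : ℕ
  hm : 1 ≤ m
  p : ℕ → ℝ
  hp : ∀ k ≤ m, p k ∈ Set.Icc (0 : ℝ) 1
  A : ℕ → Ω → ℕ
  X : ℕ → Ω → ℕ
  F : Filtration ℕ ‹MeasurableSpace Ω›
  A0 : ℕ
  B0 : ℕ
  X0 : ℕ
  Y0 : ℕ
  hA0 : ∀ ω, A 0 ω = A0
  hX0 : ∀ ω, X 0 ω = X0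
  adaptedA : ∀ n, Measurable[F n] (A n)
  adaptedX : ∀ n, Measurable[F n] (X n)
  hXle : ∀ n ω, X n ω ≤ X0 + Y0 + 2 * m * n
  step_red : ∀ n, ∀ k ≤ m,
    μ[Set.indicator {ω | A (n + 1) ω = A n ω + 1 ∧ X (n + 1) ω = X n ω + k + m}
        (fun _ => (1 : ℝ)) | F n]
      =ᵐ[μ] fun ω => (m.choose k : ℝ) *
        ((X n ω : ℝ) / ((X0 : ℝ) + Y0 + 2 * m * n)) ^ k *
        (1 - (X n ω : ℝ) / ((X0 : ℝ) + Y0 + 2 * m * n)) ^ (m - k) * p k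
  step_blue : ∀ n, ∀ k ≤ m,
    μ[Set.indicator {ω | A (n + 1) ω = A n ω ∧ X (n + 1) ω = X n ω + k}
        (fun _ => (1 : ℝ)) | F n]
      =ᵐ[μ] fun ω => (m.choose k : ℝ) *
        ((X n ω : ℝ) / ((X0 : ℝ) + Y0 + 2 * m * n)) ^ k *
        (1 - (X n ω : ℝ) / ((X0 : ℝ) + Y0 + 2 * m * n)) ^ (m - k) * (1 - p k)

namespace PAProcess

variable {Ω : Type} [MeasurableSpace Ω] (P : PAProcess Ω)

/-- Total degree `S_n = S_0 + 2mn`. -/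
def S (n : ℕ) : ℕ := P.X0 + P.Y0 + 2 * P.m * n

/-- Normalized red degree `x_n = X_n / S_n`. -/
def x (n : ℕ) (ω : Ω) : ℝ := (P.X n ω : ℝ) / (P.S n : ℝ)

/-- Normalized red node count `a_n = A_n / (A_0 + B_0 + n)`. -/
def a (n : ℕ) (ω : Ω) : ℝ := (P.A n ω : ℝ) / ((P.A0 : ℝ) + P.B0 + n)

/-- The polynomial `P` of the process. -/
def poly : ℝ → ℝ := polyP P.m P.p

/-- The zero set `Z_P` of the process. -/
def Zp : Set ℝ := zeroSetP P.m P.p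

end PAProcess

/-!
Given `F n`, the `n + 1`-st node is red with probability `f(x n)`, where
`f(z) = ∑ₖ C(m,k) zᵏ (1-z)^(m-k) p k` is a Bernstein combination of the `p k`, and
`P(z) = (f(z) - z) / 2`. Hence `A n = A 0 + ∑_{j<n} f(x j) + ∑_{j<n} D j` with martingale
differences `|D j| ≤ 1`. The martingale `∑_{j<n} D j / (j + 1)` is bounded in `L²`, so it converges
almost surely, and Kronecker's lemma gives `(∑_{j<n} D j) / n → 0`. By Cesàro, the averages of
`f(x j)` tend to `f(x) = x` when `P(x) = 0`, so `A n / n → x`, and so does `a n`.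
-/

open Topology Finset
open scoped ENNReal

theorem bernsteinPolynomial_eval (m k : ℕ) (z : ℝ) :
    (bernsteinPolynomial ℝ m k).eval z = m.choose k * z ^ k * (1 - z) ^ (m - k) := by
  simp [bernsteinPolynomial]

theorem bernsteinPolynomial_eval_nonneg (m k : ℕ) {z : ℝ} (hz : z ∈ Icc (0 : ℝ) 1) :
    0 ≤ (bernsteinPolynomial ℝ m k).eval z :=
  bernstein_nonneg (x := ⟨z, hz⟩)

theorem sum_bernsteinPolynomial_eval (m : ℕ) (z : ℝ) :
    ∑ k ∈ range (m + 1), (bernsteinPolynomial ℝ m k).eval z = 1 := by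
  simpa [Polynomial.eval_finsetSum] using congrArg (Polynomial.eval z) (bernsteinPolynomial.sum ℝ m)

theorem sum_mul_bernsteinPolynomial_eval (m : ℕ) (z : ℝ) :
    ∑ k ∈ range (m + 1), (k : ℝ) * (bernsteinPolynomial ℝ m k).eval z = m * z := by
  simpa [Polynomial.eval_finsetSum] using
    congrArg (Polynomial.eval z) (bernsteinPolynomial.sum_smul ℝ m)

/-- The conditional probability that a new node is red when the red share of the degrees is `z`. -/
noncomputable def redProb (m : ℕ) (p : ℕ → ℝ) (z : ℝ) : ℝ :=
  ∑ k ∈ range (m + 1), (bernsteinPolynomial ℝ m k).eval z * p k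

theorem continuous_redProb (m : ℕ) (p : ℕ → ℝ) : Continuous (redProb m p) := by
  unfold redProb
  fun_prop

theorem redProb_mem_Icc {m : ℕ} {p : ℕ → ℝ} (hp : ∀ k ≤ m, p k ∈ Icc (0 : ℝ) 1) {z : ℝ}
    (hz : z ∈ Icc (0 : ℝ) 1) : redProb m p z ∈ Icc (0 : ℝ) 1 := by
  have hp' : ∀ k ∈ range (m + 1), p k ∈ Icc (0 : ℝ) 1 :=
    fun k hk => hp k (Nat.lt_succ_iff.mp (mem_range.mp hk))
  constructor
  · exact sum_nonneg fun k hk => mul_nonneg (bernsteinPolynomial_eval_nonneg m k hz) (hp' k hk).1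
  · calc redProb m p z ≤ ∑ k ∈ range (m + 1), (bernsteinPolynomial ℝ m k).eval z :=
          sum_le_sum fun k hk =>
            mul_le_of_le_one_right (bernsteinPolynomial_eval_nonneg m k hz) (hp' k hk).2
      _ = 1 := sum_bernsteinPolynomial_eval m z

theorem polyP_eq_half_redProb_sub {m : ℕ} (hm : m ≠ 0) (p : ℕ → ℝ) (z : ℝ) :
    polyP m p z = (redProb m p z - z) / 2 := by
  have hsplit : ∀ k ∈ range (m + 1),
      (m.choose k : ℝ) * z ^ k * (1 - z) ^ (m - k) * (p k - k / m)
        = (bernsteinPolynomial ℝ m k).eval z * p k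
          - (m : ℝ)⁻¹ * (k * (bernsteinPolynomial ℝ m k).eval z) := fun k _ => by
    rw [bernsteinPolynomial_eval]; ring
  rw [polyP, sum_congr rfl hsplit, sum_sub_distrib, ← mul_sum, sum_mul_bernsteinPolynomial_eval,
    redProb, inv_mul_cancel_left₀ (by exact_mod_cast hm)]
  ring

theorem integral_mul_eq_zero_of_condExp_eq_zero {Ω : Type*} {m m0 : MeasurableSpace Ω}
    {μ : Measure Ω} (hm : m ≤ m0) [SigmaFinite (μ.trim hm)] {f g : Ω → ℝ}
    (hf : StronglyMeasurable[m] f) (hfg : Integrable (f * g) μ) (hg : Integrable g μ)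
    (hg0 : μ[g | m] =ᵐ[μ] 0) : ∫ ω, f ω * g ω ∂μ = 0 := by
  have h : μ[f * g | m] =ᵐ[μ] 0 := by
    filter_upwards [condExp_mul_of_stronglyMeasurable_left hf hfg hg, hg0] with ω h1 h2
    simp [h1, h2]
  simpa using (integral_condExp hm (f := f * g)).symm.trans (integral_congr_ae h)

theorem eLpNorm_one_le_of_integral_sq_le {Ω : Type*} {m0 : MeasurableSpace Ω} {μ : Measure Ω}
    [IsProbabilityMeasure μ] {f : Ω → ℝ} (hf : MemLp f 2 μ) {K : ℝ}
    (hK : ∫ ω, f ω ^ 2 ∂μ ≤ K) : eLpNorm f 1 μ ≤ ENNReal.ofReal ((K + 1) / 2) := by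
  have hint := hf.integrable one_le_two
  have habs : ∫ ω, |f ω| ∂μ ≤ (K + 1) / 2 := calc
    ∫ ω, |f ω| ∂μ ≤ ∫ ω, (f ω ^ 2 + 1) / 2 ∂μ :=
      integral_mono hint.abs ((hf.integrable_sq.add (integrable_const 1)).div_const 2)
        fun ω => by nlinarith [sq_abs (f ω), sq_nonneg (|f ω| - 1)]
    _ = (∫ ω, f ω ^ 2 ∂μ + 1) / 2 := by
      rw [integral_div, integral_add hf.integrable_sq (integrable_const 1)]
      simp
    _ ≤ (K + 1) / 2 := by linarith
  rw [eLpNorm_one_eq_lintegral_enorm, ← ofReal_integral_norm_eq_lintegral_enorm hint]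
  exact ENNReal.ofReal_le_ofReal habs

/-- Kronecker's lemma for the weights `j + 1`. -/
theorem tendsto_cesaro_zero_of_tendsto_sum_inv_succ_mul {u : ℕ → ℝ} {c : ℝ}
    (h : Tendsto (fun n => ∑ j ∈ range n, ((j : ℝ) + 1)⁻¹ * u j) atTop (𝓝 c)) :
    Tendsto (fun n => (∑ j ∈ range n, u j) / n) atTop (𝓝 0) := by
  set s : ℕ → ℝ := fun n => ∑ j ∈ range n, ((j : ℝ) + 1)⁻¹ * u j
  -- Abel summation
  have abel : ∀ n : ℕ, ∑ j ∈ range n, u j = n * s n - ∑ j ∈ range n, s j := by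
    intro n
    induction n with
    | zero => simp
    | succ n ih =>
      simp only [s, sum_range_succ] at ih ⊢
      rw [ih]
      field_simp
      push_cast
      ring
  have hlim := h.sub h.cesaro
  rw [sub_self] at hlim
  refine hlim.congr' ?_
  filter_upwards [eventually_ne_atTop 0] with n hn
  rw [abel]
  field_simp

theorem tendsto_div_const_add_of_tendsto_div {u : ℕ → ℝ} {L : ℝ} (c : ℝ)
    (h : Tendsto (fun n => u n / n) atTop (𝓝 L)) :
    Tendsto (fun n => u n / (c + n)) atTop (𝓝 L) := by
  have hmul := h.mul (tendsto_natCast_div_add_atTop c)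
  rw [mul_one] at hmul
  refine hmul.congr' ?_
  filter_upwards [eventually_ne_atTop 0] with n hn
  rw [add_comm c, div_mul_div_cancel₀ (by exact_mod_cast hn)]

section BoundedMartingaleDifferences

variable {Ω : Type*} {m0 : MeasurableSpace Ω} {μ : Measure Ω} [IsProbabilityMeasure μ]
  {ℱ : Filtration ℕ m0} {D : ℕ → Ω → ℝ} {C : ℝ}

noncomputable def harmonicWeightedSum (D : ℕ → Ω → ℝ) (n : ℕ) (ω : Ω) : ℝ :=
  ∑ j ∈ range n, ((j : ℝ) + 1)⁻¹ * D j ω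

omit [IsProbabilityMeasure μ] in
theorem stronglyAdapted_harmonicWeightedSum (hD : ∀ n, StronglyMeasurable[ℱ (n + 1)] (D n)) :
    StronglyAdapted ℱ (harmonicWeightedSum D) := fun n =>
  Finset.stronglyMeasurable_fun_sum (range n) fun j hj =>
    ((hD j).mono (ℱ.mono (mem_range.mp hj))).const_mul _

theorem memLp_of_ae_abs_le (hD : ∀ n, StronglyMeasurable[ℱ (n + 1)] (D n))
    (hbdd : ∀ n, ∀ᵐ ω ∂μ, |D n ω| ≤ C) (p : ℝ≥0∞) (n : ℕ) : MemLp (D n) p μ :=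
  .of_bound ((hD n).mono (ℱ.le _)).aestronglyMeasurable C (hbdd n)

theorem memLp_harmonicWeightedSum (hD : ∀ n, StronglyMeasurable[ℱ (n + 1)] (D n))
    (hbdd : ∀ n, ∀ᵐ ω ∂μ, |D n ω| ≤ C) (p : ℝ≥0∞) (n : ℕ) :
    MemLp (harmonicWeightedSum D n) p μ :=
  memLp_finsetSum _ fun j _ => (memLp_of_ae_abs_le hD hbdd p j).const_mul _

theorem martingale_harmonicWeightedSum (hD : ∀ n, StronglyMeasurable[ℱ (n + 1)] (D n))
    (hbdd : ∀ n, ∀ᵐ ω ∂μ, |D n ω| ≤ C) (hcond : ∀ n, μ[D n | ℱ n] =ᵐ[μ] 0) :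
    Martingale (harmonicWeightedSum D) ℱ μ := by
  refine martingale_of_condExp_sub_eq_zero_nat (stronglyAdapted_harmonicWeightedSum hD)
    (fun n => (memLp_harmonicWeightedSum hD hbdd 1 n).integrable le_rfl) fun n => ?_
  have hsub : harmonicWeightedSum D (n + 1) - harmonicWeightedSum D n
      = ((n : ℝ) + 1)⁻¹ • D n := by
    ext ω
    simp [harmonicWeightedSum, sum_range_succ]
  filter_upwards [hsub ▸ condExp_smul (μ := μ) ((n : ℝ) + 1)⁻¹ (D n) (ℱ n), hcond n]
    with ω h1 h2
  simp [h1, h2]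

theorem integral_sq_harmonicWeightedSum_le (hD : ∀ n, StronglyMeasurable[ℱ (n + 1)] (D n))
    (hbdd : ∀ n, ∀ᵐ ω ∂μ, |D n ω| ≤ C) (hcond : ∀ n, μ[D n | ℱ n] =ᵐ[μ] 0) (n : ℕ) :
    ∫ ω, harmonicWeightedSum D n ω ^ 2 ∂μ ≤ C ^ 2 * ∑ j ∈ range n, (((j : ℝ) + 1)⁻¹) ^ 2 := by
  induction n with
  | zero => simp [harmonicWeightedSum]
  | succ n ih =>
    set N := harmonicWeightedSum D n
    set c := ((n : ℝ) + 1)⁻¹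
    have hN := memLp_harmonicWeightedSum hD hbdd 2 n
    have hDn := memLp_of_ae_abs_le hD hbdd 2 n
    have hND : Integrable (fun ω => N ω * D n ω) μ := hN.integrable_mul hDn
    have horth : ∫ ω, N ω * D n ω ∂μ = 0 :=
      integral_mul_eq_zero_of_condExp_eq_zero (ℱ.le n) (stronglyAdapted_harmonicWeightedSum hD n)
        hND (hDn.integrable one_le_two) (hcond n)
    have hD2 : ∫ ω, D n ω ^ 2 ∂μ ≤ C ^ 2 := by
      refine (integral_mono_ae hDn.integrable_sq (integrable_const (C ^ 2)) ?_).trans (by simp)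
      filter_upwards [hbdd n] with ω hω
      exact (sq_abs (D n ω)).symm.trans_le (pow_le_pow_left₀ (abs_nonneg _) hω 2)
    have hexpand : (fun ω => harmonicWeightedSum D (n + 1) ω ^ 2)
        = fun ω => N ω ^ 2 + (2 * c * (N ω * D n ω) + c ^ 2 * D n ω ^ 2) := by
      ext ω
      simp only [N, c, harmonicWeightedSum, sum_range_succ]
      ring
    calc ∫ ω, harmonicWeightedSum D (n + 1) ω ^ 2 ∂μ
        = ∫ ω, N ω ^ 2 ∂μ + (2 * c * ∫ ω, N ω * D n ω ∂μ + c ^ 2 * ∫ ω, D n ω ^ 2 ∂μ) := by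
          have h1 : Integrable (fun ω => 2 * c * (N ω * D n ω)) μ := hND.const_mul _
          have h2 : Integrable (fun ω => c ^ 2 * D n ω ^ 2) μ := hDn.integrable_sq.const_mul _
          rw [hexpand, integral_add hN.integrable_sq, integral_add h1 h2,
            integral_const_mul, integral_const_mul]
          exact h1.add h2
      _ ≤ C ^ 2 * ∑ j ∈ range (n + 1), (((j : ℝ) + 1)⁻¹) ^ 2 := by
          rw [horth, sum_range_succ]
          nlinarith [sq_nonneg c]

theorem ae_tendsto_sum_div_of_condExp_eq_zero (hD : ∀ n, StronglyMeasurable[ℱ (n + 1)] (D n))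
    (hbdd : ∀ n, ∀ᵐ ω ∂μ, |D n ω| ≤ C) (hcond : ∀ n, μ[D n | ℱ n] =ᵐ[μ] 0) :
    ∀ᵐ ω ∂μ, Tendsto (fun n => (∑ j ∈ range n, D j ω) / n) atTop (𝓝 0) := by
  have hS : Summable fun j : ℕ => (((j : ℝ) + 1)⁻¹) ^ 2 := by
    simpa using (summable_nat_add_iff 1).mpr (Real.summable_nat_pow_inv.mpr one_lt_two)
  set S := ∑' j : ℕ, (((j : ℝ) + 1)⁻¹) ^ 2
  have hL1 (n : ℕ) :
      eLpNorm (harmonicWeightedSum D n) 1 μ ≤ ENNReal.ofReal ((C ^ 2 * S + 1) / 2) := by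
    refine eLpNorm_one_le_of_integral_sq_le (memLp_harmonicWeightedSum hD hbdd 2 n)
      ((integral_sq_harmonicWeightedSum_le hD hbdd hcond n).trans ?_)
    gcongr
    exact hS.sum_le_tsum _ fun j _ => by positivity
  have hconv :=
    (martingale_harmonicWeightedSum hD hbdd hcond).submartingale.exists_ae_tendsto_of_bdd hL1
  filter_upwards [hconv] with ω ⟨c, hc⟩
  exact tendsto_cesaro_zero_of_tendsto_sum_inv_succ_mul hc

end BoundedMartingaleDifferences

theorem condExp_indicator_biUnion {Ω ι : Type*} {m m0 : MeasurableSpace Ω} {μ : Measure Ω}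
    [IsFiniteMeasure μ] {s : Finset ι} {E : ι → Set Ω} {g : ι → Ω → ℝ}
    (hE : ∀ i ∈ s, MeasurableSet (E i)) (hd : (s : Set ι).PairwiseDisjoint E)
    (hg : ∀ i ∈ s, μ[(E i).indicator 1 | m] =ᵐ[μ] g i) :
    μ[(⋃ i ∈ s, E i).indicator 1 | m] =ᵐ[μ] ∑ i ∈ s, g i := by
  have hsum : (⋃ i ∈ s, E i).indicator (1 : Ω → ℝ) = ∑ i ∈ s, (E i).indicator 1 := by
    ext ω
    rw [Finset.sum_apply]
    exact Finset.indicator_biUnion_apply s E hd ω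
  rw [hsum]
  refine (condExp_finsetSum (fun i hi => (integrable_const 1).indicator (hE i hi)) m).trans ?_
  filter_upwards [eventually_all_finset s |>.2 hg] with ω hω
  simp only [Finset.sum_apply]
  exact sum_congr rfl hω

theorem ae_mem_of_condExp_indicator_eq_one {Ω : Type*} {m m0 : MeasurableSpace Ω}
    {μ : Measure Ω} [IsProbabilityMeasure μ] (hm : m ≤ m0) {s : Set Ω} (hs : MeasurableSet s)
    (h : μ[s.indicator (1 : Ω → ℝ) | m] =ᵐ[μ] 1) : ∀ᵐ ω ∂μ, ω ∈ s := by
  have hreal : μ.real s = 1 := by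
    rw [← integral_indicator_one hs, ← integral_condExp hm, integral_congr_ae h]
    simp
  exact (mem_ae_iff_prob_eq_one hs).2 ((ENNReal.toReal_eq_one_iff _).1 hreal)

namespace PAProcess

variable {Ω : Type} [MeasurableSpace Ω] (P : PAProcess Ω)

def redEvent (n k : ℕ) : Set Ω :=
  {ω | P.A (n + 1) ω = P.A n ω + 1 ∧ P.X (n + 1) ω = P.X n ω + k + P.m}

def blueEvent (n k : ℕ) : Set Ω :=
  {ω | P.A (n + 1) ω = P.A n ω ∧ P.X (n + 1) ω = P.X n ω + k}

def redStep (n : ℕ) : Set Ω := ⋃ k ∈ range (P.m + 1), P.redEvent n k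

def blueStep (n : ℕ) : Set Ω := ⋃ k ∈ range (P.m + 1), P.blueEvent n k

theorem measurable_A (n : ℕ) : Measurable (P.A n) := (P.adaptedA n).mono (P.F.le n) le_rfl

theorem measurable_X (n : ℕ) : Measurable (P.X n) := (P.adaptedX n).mono (P.F.le n) le_rfl

theorem measurableSet_redEvent (n k : ℕ) : MeasurableSet (P.redEvent n k) :=
  (measurableSet_eq_fun (P.measurable_A _) ((P.measurable_A n).add_const 1)).inter
    (measurableSet_eq_fun (P.measurable_X _) (((P.measurable_X n).add_const k).add_const P.m))

theorem measurableSet_blueEvent (n k : ℕ) : MeasurableSet (P.blueEvent n k) :=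
  (measurableSet_eq_fun (P.measurable_A _) (P.measurable_A n)).inter
    (measurableSet_eq_fun (P.measurable_X _) ((P.measurable_X n).add_const k))

theorem measurableSet_redStep (n : ℕ) : MeasurableSet (P.redStep n) :=
  Finset.measurableSet_biUnion _ fun k _ => P.measurableSet_redEvent n k

theorem measurableSet_blueStep (n : ℕ) : MeasurableSet (P.blueStep n) :=
  Finset.measurableSet_biUnion _ fun k _ => P.measurableSet_blueEvent n k

theorem pairwiseDisjoint_redEvent (n : ℕ) :
    (Finset.range (P.m + 1) : Set ℕ).PairwiseDisjoint (P.redEvent n) :=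
  fun _ _ _ _ hkk' => Set.disjoint_left.2 fun _ ⟨_, h⟩ ⟨_, h'⟩ => hkk' (by omega)

theorem pairwiseDisjoint_blueEvent (n : ℕ) :
    (Finset.range (P.m + 1) : Set ℕ).PairwiseDisjoint (P.blueEvent n) :=
  fun _ _ _ _ hkk' => Set.disjoint_left.2 fun _ ⟨_, h⟩ ⟨_, h'⟩ => hkk' (by omega)

theorem disjoint_redStep_blueStep (n : ℕ) : Disjoint (P.redStep n) (P.blueStep n) := by
  simp only [redStep, blueStep, disjoint_iUnion_left, disjoint_iUnion_right]
  exact fun _ _ _ _ => Set.disjoint_left.2 fun _ ⟨h, _⟩ ⟨h', _⟩ => by omega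

theorem x_eq (n : ℕ) (ω : Ω) : P.x n ω = P.X n ω / ((P.X0 : ℝ) + P.Y0 + 2 * P.m * n) := by
  simp [x, S]

theorem x_mem_Icc (n : ℕ) (ω : Ω) : P.x n ω ∈ Icc (0 : ℝ) 1 :=
  ⟨by unfold x; positivity,
    div_le_one_of_le₀ (Nat.cast_le.mpr (P.hXle n ω)) (Nat.cast_nonneg _)⟩

theorem measurable_x (n : ℕ) : Measurable[P.F n] (P.x n) :=
  (measurable_from_top.comp (P.adaptedX n)).div_const _

theorem condExp_indicator_redStep (n : ℕ) :
    P.μ[(P.redStep n).indicator 1 | P.F n] =ᵐ[P.μ] fun ω => redProb P.m P.p (P.x n ω) := by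
  have := P.isProb
  refine (condExp_indicator_biUnion (fun k _ => P.measurableSet_redEvent n k)
    (P.pairwiseDisjoint_redEvent n)
    (g := fun k ω => (bernsteinPolynomial ℝ P.m k).eval (P.x n ω) * P.p k) fun k hk => ?_).trans
    (.of_forall fun ω => ?_)
  · filter_upwards [P.step_red n k (Nat.lt_succ_iff.mp (mem_range.mp hk))] with ω hω
    exact hω.trans (by rw [x_eq, bernsteinPolynomial_eval])
  · simp [redProb]

theorem condExp_indicator_blueStep (n : ℕ) :
    P.μ[(P.blueStep n).indicator 1 | P.F n] =ᵐ[P.μ]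
      fun ω => ∑ k ∈ range (P.m + 1),
        (bernsteinPolynomial ℝ P.m k).eval (P.x n ω) * (1 - P.p k) := by
  have := P.isProb
  refine (condExp_indicator_biUnion (fun k _ => P.measurableSet_blueEvent n k)
    (P.pairwiseDisjoint_blueEvent n)
    (g := fun k ω => (bernsteinPolynomial ℝ P.m k).eval (P.x n ω) * (1 - P.p k))
    fun k hk => ?_).trans (.of_forall fun ω => ?_)
  · filter_upwards [P.step_blue n k (Nat.lt_succ_iff.mp (mem_range.mp hk))] with ω hω
    exact hω.trans (by rw [x_eq, bernsteinPolynomial_eval])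
  · simp

theorem ae_mem_redStep_union_blueStep (n : ℕ) : ∀ᵐ ω ∂P.μ, ω ∈ P.redStep n ∪ P.blueStep n := by
  have := P.isProb
  refine ae_mem_of_condExp_indicator_eq_one (P.F.le n)
    ((P.measurableSet_redStep n).union (P.measurableSet_blueStep n)) ?_
  rw [indicator_union_of_disjoint (P.disjoint_redStep_blueStep n)]
  refine (condExp_add ((integrable_const 1).indicator (P.measurableSet_redStep n))
    ((integrable_const 1).indicator (P.measurableSet_blueStep n)) _).trans ?_
  filter_upwards [P.condExp_indicator_redStep n, P.condExp_indicator_blueStep n] with ω hr hb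
  simp only [Pi.add_apply, hr, hb, Pi.one_apply, redProb, ← sum_add_distrib, ← mul_add,
    add_sub_cancel, mul_one, sum_bernsteinPolynomial_eval]

theorem ae_increment_eq_indicator_redStep (n : ℕ) :
    ∀ᵐ ω ∂P.μ, (P.A (n + 1) ω : ℝ) - P.A n ω = (P.redStep n).indicator 1 ω := by
  filter_upwards [P.ae_mem_redStep_union_blueStep n] with ω hω
  rcases hω with hr | hb
  · obtain ⟨k, -, hk, -⟩ := mem_iUnion₂.mp hr
    rw [indicator_of_mem hr, hk]
    simp
  · obtain ⟨k, -, hk, -⟩ := mem_iUnion₂.mp hb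
    rw [indicator_of_notMem ((P.disjoint_redStep_blueStep n).notMem_of_mem_right hb), hk, sub_self]

def centeredIncrement (n : ℕ) (ω : Ω) : ℝ :=
  (P.A (n + 1) ω : ℝ) - P.A n ω - redProb P.m P.p (P.x n ω)

theorem measurable_redProb_x (n : ℕ) : Measurable[P.F n] fun ω => redProb P.m P.p (P.x n ω) :=
  (continuous_redProb P.m P.p).measurable.comp (P.measurable_x n)

theorem stronglyMeasurable_centeredIncrement (n : ℕ) :
    StronglyMeasurable[P.F (n + 1)] (P.centeredIncrement n) := by
  have hmono := P.F.mono n.le_succ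
  exact (((measurable_from_top.comp (P.adaptedA (n + 1))).sub
    (measurable_from_top.comp ((P.adaptedA n).mono hmono le_rfl))).sub
    ((P.measurable_redProb_x n).mono hmono le_rfl)).stronglyMeasurable

theorem ae_abs_centeredIncrement_le (n : ℕ) : ∀ᵐ ω ∂P.μ, |P.centeredIncrement n ω| ≤ 1 := by
  filter_upwards [P.ae_increment_eq_indicator_redStep n] with ω hω
  have hr := redProb_mem_Icc P.hp (P.x_mem_Icc n ω)
  have hi : (P.redStep n).indicator (1 : Ω → ℝ) ω ∈ Set.Icc 0 1 := by
    by_cases h : ω ∈ P.redStep n <;> simp [h]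
  rw [centeredIncrement, hω, abs_le]
  constructor <;> linarith [hr.1, hr.2, hi.1, hi.2]

theorem condExp_centeredIncrement (n : ℕ) : P.μ[P.centeredIncrement n | P.F n] =ᵐ[P.μ] 0 := by
  have := P.isProb
  have hf := P.measurable_redProb_x n
  have hfint : Integrable (fun ω => redProb P.m P.p (P.x n ω)) P.μ :=
    (memLp_of_bounded (.of_forall fun ω => redProb_mem_Icc P.hp (P.x_mem_Icc n ω))
      (hf.mono (P.F.le n) le_rfl).aestronglyMeasurable 1).integrable le_rfl
  have heq : P.centeredIncrement n
      =ᵐ[P.μ] (P.redStep n).indicator 1 - fun ω => redProb P.m P.p (P.x n ω) := by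
    filter_upwards [P.ae_increment_eq_indicator_redStep n] with ω hω
    simp [centeredIncrement, hω]
  refine (condExp_congr_ae heq).trans ((condExp_sub ((integrable_const 1).indicator
    (P.measurableSet_redStep n)) hfint _).trans ?_)
  rw [condExp_of_stronglyMeasurable (P.F.le n) hf.stronglyMeasurable hfint]
  filter_upwards [P.condExp_indicator_redStep n] with ω h
  simp [h]

theorem ae_tendsto_A_sub_sum_redProb_div :
    ∀ᵐ ω ∂P.μ, Tendsto (fun n => ((P.A n ω : ℝ) - ∑ j ∈ range n, redProb P.m P.p (P.x j ω)) / n)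
      atTop (𝓝 0) := by
  have := P.isProb
  filter_upwards [ae_tendsto_sum_div_of_condExp_eq_zero P.stronglyMeasurable_centeredIncrement
    P.ae_abs_centeredIncrement_le P.condExp_centeredIncrement] with ω hω
  have htele (n : ℕ) : (P.A n ω : ℝ) - ∑ j ∈ range n, redProb P.m P.p (P.x j ω)
      = P.A0 + ∑ j ∈ range n, P.centeredIncrement j ω := by
    induction n with
    | zero => simp [P.hA0]
    | succ n ih =>
      rw [sum_range_succ, sum_range_succ, centeredIncrement]
      linarith
  simp_rw [htele, add_div]
  simpa using (tendsto_const_div_atTop_nhds_zero_nat (P.A0 : ℝ)).add hω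

end PAProcess

/-- **From degrees to vertices.** Suppose the process `{x_n}` converges almost surely with
limit `x = lim x_n`.  If `P(x) = 0` almost surely, then the process `{a_n}` converges almost
surely as well, and `lim a_n = x` almost surely. -/
theorem tendsto_a_of_tendsto_x
    {Ω : Type} [MeasurableSpace Ω] (P : PAProcess Ω)
    (L : Ω → ℝ)
    (hx : ∀ᵐ ω ∂P.μ, Tendsto (fun n => P.x n ω) atTop (nhds (L ω)))
    (hP : ∀ᵐ ω ∂P.μ, P.poly (L ω) = 0) :
    ∀ᵐ ω ∂P.μ, Tendsto (fun n => P.a n ω) atTop (nhds (L ω)) := by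
  have := P.isProb
  filter_upwards [hx, hP, P.ae_tendsto_A_sub_sum_redProb_div] with ω hxω hPω hAω
  have hfix : redProb P.m P.p (L ω) = L ω := by
    have := polyP_eq_half_redProb_sub (Nat.one_le_iff_ne_zero.mp P.hm) P.p (L ω)
    rw [PAProcess.poly] at hPω
    linarith
  have hcesaro := (((continuous_redProb P.m P.p).tendsto (L ω)).comp hxω).cesaro
  rw [hfix] at hcesaro
  have hAn : Tendsto (fun n => (P.A n ω : ℝ) / n) atTop (𝓝 (L ω)) := by
    refine (zero_add (L ω) ▸ hAω.add hcesaro).congr fun n => ?_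
    simp only [Function.comp_apply]
    ring
  exact tendsto_div_const_add_of_tendsto_div ((P.A0 : ℝ) + P.B0) hAn
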